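/- Let 0 < α ≤ 1, let s be a positive integer with s ≤ n, and let k > 0 be such that ks is a positive integer and a(s,ks;α) = (√(ks) − α)/(√s + α) > 1. Let b = Ax + z with ‖z‖₁ ≤ η₁. Suppose A ∈ ℝ^{m×n} has (ℓ₂,ℓ₁)-RIP constants satisfying δ_{ks}^{ub} + a(s,ks;α)·δ_{(k+1)s}^{lb} < a(s,ks;α) − 1, and let x̂ satisfy ‖b − A x̂‖₁ ≤ η₁ and ‖x̂‖₁ − α‖x̂‖₂ ≤ ‖x‖₁ − α‖x‖₂ (in particular, x̂ may be any minimizer of ‖·‖₁ − α‖·‖₂ subject to ‖b − Az‖₁ ≤ η₁). Then ‖x̂ − x‖₂ ≤ [2(2√k + 1)√s / ((2√(ks) − α)·ρ_{ks})]·η₁ + [√s/(2√(ks) − α)]·[(2√k + 1)(1 + δ_{ks}^{ub})√s/(ρ_{ks}(√(ks) − α)) + 1]·(2‖x_{-max(s)}‖₁/√s), where ρ_{ks} = 1 − δ_{(k+1)s}^{lb} − (1 + δ_{ks}^{ub})/a(s,ks;α). -/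

import Mathlib

open Finset

/-- The ℓ₁ norm of a vector in `ℝⁿ`. -/
noncomputable def l1norm {n : ℕ} (x : Fin n → ℝ) : ℝ := ∑ i, |x i|

/-- The ℓ₂ norm of a vector in `ℝⁿ`. -/
noncomputable def l2norm {n : ℕ} (x : Fin n → ℝ) : ℝ := Real.sqrt (∑ i, (x i) ^ 2)

/-- The restriction `x_S` of a vector `x` to an index set `S` (equal to `x` on `S`, zero
outside `S`). -/
def restr {n : ℕ} (x : Fin n → ℝ) (S : Finset (Fin n)) : Fin n → ℝ :=
  fun i => if i ∈ S then x i else 0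

/-- `T` is an index set of the `s` largest-magnitude entries of `x` among the indices in `S`. -/
def IsMaxIdxOn {n : ℕ} (x : Fin n → ℝ) (s : ℕ) (T S : Finset (Fin n)) : Prop :=
  T ⊆ S ∧ T.card = s ∧ ∀ i ∈ T, ∀ j ∈ S \ T, |x j| ≤ |x i|

/-- `T` is an index set of the `s` largest-magnitude entries of `x`. -/
def IsMaxIdx {n : ℕ} (x : Fin n → ℝ) (s : ℕ) (T : Finset (Fin n)) : Prop :=
  IsMaxIdxOn x s T Finset.univ

/-- A vector is `r`-sparse: it has at most `r` nonzero entries. -/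
def Sparse {n : ℕ} (r : ℕ) (v : Fin n → ℝ) : Prop :=
  ∃ S : Finset (Fin n), S.card ≤ r ∧ ∀ i ∉ S, v i = 0

/-!
Write `d = x̂ - x`, let `T` carry the `s` largest entries of `x` and `T₁` the `ks` largest entries
of `d` off `T`. Comparing the objective `‖·‖₁ - α‖·‖₂` at `x̂` and `x` gives the cone constraint
`‖d_{Tᶜ}‖₁ ≤ √s ‖d_{T ∪ T₁}‖₂ + α ‖d‖₂ + 2 ‖x_{Tᶜ}‖₁`. Every entry of `d` outside `T ∪ T₁` is at
most `‖d_{T₁}‖₁ / ks`, which bounds `‖d_{(T ∪ T₁)ᶜ}‖₂` by `‖d_{Tᶜ}‖₁ / (2√(ks))`; cutting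
`d_{(T ∪ T₁)ᶜ}` into blocks of `ks` entries and applying the upper RIP bound to each block bounds
`‖A d_{(T ∪ T₁)ᶜ}‖₁` by `(1 + δ^{ub}) ‖d_{Tᶜ}‖₁ / √(ks)`. Together with `‖A d‖₁ ≤ 2η₁` and the lower
RIP bound on `d_{T ∪ T₁}`, this is a linear system of inequalities in `‖d_{T ∪ T₁}‖₂`,
`‖d_{Tᶜ}‖₁` and `‖d‖₂` whose solution is the stated bound.
-/

section Norms

variable {n : ℕ}

lemma l1norm_nonneg (x : Fin n → ℝ) : 0 ≤ l1norm x :=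
  sum_nonneg fun _ _ => abs_nonneg _

lemma l1norm_add_le (x y : Fin n → ℝ) : l1norm (x + y) ≤ l1norm x + l1norm y := by
  simp only [l1norm, ← sum_add_distrib]
  exact sum_le_sum fun i _ => abs_add_le _ _

lemma l1norm_neg (x : Fin n → ℝ) : l1norm (-x) = l1norm x := by
  simp [l1norm]

lemma l1norm_sub_le (x y : Fin n → ℝ) : l1norm (x - y) ≤ l1norm x + l1norm y := by
  simpa [sub_eq_add_neg, l1norm_neg] using l1norm_add_le x (-y)

lemma l2norm_nonneg (x : Fin n → ℝ) : 0 ≤ l2norm x :=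
  Real.sqrt_nonneg _

lemma l2norm_eq_norm_toLp (x : Fin n → ℝ) : l2norm x = ‖WithLp.toLp 2 x‖ := by
  simp [l2norm, EuclideanSpace.norm_eq]

lemma l2norm_add_le (x y : Fin n → ℝ) : l2norm (x + y) ≤ l2norm x + l2norm y := by
  simpa only [l2norm_eq_norm_toLp, WithLp.toLp_add] using norm_add_le _ _

end Norms

section Restriction

variable {n : ℕ}

lemma sum_restr (f : ℝ → ℝ) (hf : f 0 = 0) (x : Fin n → ℝ) (S : Finset (Fin n)) :
    ∑ i, f (restr x S i) = ∑ i ∈ S, f (x i) := by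
  rw [← sum_subset (subset_univ S) fun i _ hi => by simp [restr, hi, hf]]
  exact sum_congr rfl fun i hi => by simp [restr, hi]

lemma l1norm_restr (x : Fin n → ℝ) (S : Finset (Fin n)) :
    l1norm (restr x S) = ∑ i ∈ S, |x i| :=
  sum_restr _ abs_zero x S

lemma l2norm_restr_sq (x : Fin n → ℝ) (S : Finset (Fin n)) :
    l2norm (restr x S) ^ 2 = ∑ i ∈ S, x i ^ 2 := by
  rw [l2norm, Real.sq_sqrt (sum_nonneg fun _ _ => sq_nonneg _)]
  exact sum_restr (· ^ 2) (zero_pow two_ne_zero) x S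

lemma restr_add_restr_compl (x : Fin n → ℝ) (S : Finset (Fin n)) :
    restr x S + restr x Sᶜ = x := by
  funext i
  by_cases h : i ∈ S <;> simp [restr, h]

lemma restr_add_restr_sdiff (x : Fin n → ℝ) {T S : Finset (Fin n)} (hTS : T ⊆ S) :
    restr x T + restr x (S \ T) = restr x S := by
  funext i
  by_cases hiT : i ∈ T
  · simp [restr, hiT, hTS hiT]
  · by_cases hiS : i ∈ S <;> simp [restr, hiT, hiS]

lemma l1norm_restr_add_restr_sdiff (x : Fin n → ℝ) {T S : Finset (Fin n)} (hTS : T ⊆ S) :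
    l1norm (restr x T) + l1norm (restr x (S \ T)) = l1norm (restr x S) := by
  rw [l1norm_restr, l1norm_restr, l1norm_restr, add_comm, sum_sdiff hTS]

lemma l1norm_restr_add_restr_compl (x : Fin n → ℝ) (S : Finset (Fin n)) :
    l1norm (restr x S) + l1norm (restr x Sᶜ) = l1norm x := by
  rw [l1norm_restr, l1norm_restr, sum_add_sum_compl, l1norm]

lemma l1norm_restr_sub_l1norm_restr_le (x y : Fin n → ℝ) (S : Finset (Fin n)) :
    l1norm (restr x S) - l1norm (restr y S) ≤ l1norm (restr (x + y) S) := by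
  simp only [l1norm_restr, ← sum_sub_distrib, Pi.add_apply]
  exact sum_le_sum fun i _ => by simpa using abs_sub_abs_le_abs_sub (x i) (-y i)

lemma l2norm_restr_mono (x : Fin n → ℝ) {T S : Finset (Fin n)} (hTS : T ⊆ S) :
    l2norm (restr x T) ≤ l2norm (restr x S) := by
  refine (pow_le_pow_iff_left₀ (l2norm_nonneg _) (l2norm_nonneg _) two_ne_zero).mp ?_
  rw [l2norm_restr_sq, l2norm_restr_sq]
  exact sum_le_sum_of_subset_of_nonneg hTS fun _ _ _ => sq_nonneg _

lemma l2norm_le_restr_add_restr_compl (x : Fin n → ℝ) (S : Finset (Fin n)) :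
    l2norm x ≤ l2norm (restr x S) + l2norm (restr x Sᶜ) := by
  simpa only [restr_add_restr_compl] using l2norm_add_le (restr x S) (restr x Sᶜ)

lemma sparse_restr (x : Fin n → ℝ) {S : Finset (Fin n)} {r : ℕ} (h : S.card ≤ r) :
    Sparse r (restr x S) :=
  ⟨S, h, fun _ hi => if_neg hi⟩

lemma l1norm_restr_le_sqrt_card_mul_l2norm (x : Fin n → ℝ) (S : Finset (Fin n)) :
    l1norm (restr x S) ≤ √(S.card : ℝ) * l2norm (restr x S) := by
  refine (pow_le_pow_iff_left₀ (l1norm_nonneg _)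
    (mul_nonneg (Real.sqrt_nonneg _) (l2norm_nonneg _)) two_ne_zero).mp ?_
  rw [mul_pow, Real.sq_sqrt (Nat.cast_nonneg _), l2norm_restr_sq, l1norm_restr]
  simpa only [sq_abs] using sq_sum_le_card_mul_sum_sq (s := S) (f := fun i => |x i|)

end Restriction

section BoundedEntries

variable {n : ℕ} {x : Fin n → ℝ} {S : Finset (Fin n)} {c : ℕ} {L : ℝ}

lemma l2norm_restr_le_of_abs_mul_le (hc : 0 < c) (hL : 0 ≤ L) (hS : S.card ≤ c)
    (hbd : ∀ j ∈ S, |x j| * c ≤ L) :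
    l2norm (restr x S) ≤ L / √(c : ℝ) := by
  have hc' : (0 : ℝ) < c := Nat.cast_pos.mpr hc
  refine (pow_le_pow_iff_left₀ (l2norm_nonneg _) (by positivity) two_ne_zero).mp ?_
  rw [l2norm_restr_sq, div_pow, Real.sq_sqrt hc'.le]
  calc ∑ i ∈ S, x i ^ 2 ≤ ∑ _i ∈ S, (L / c) ^ 2 := by
        refine sum_le_sum fun i hi => ?_
        rw [← sq_abs]
        exact pow_le_pow_left₀ (abs_nonneg _) ((le_div_iff₀ hc').mpr (hbd i hi)) 2
    _ = S.card * (L / c) ^ 2 := by rw [sum_const, nsmul_eq_mul]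
    _ ≤ c * (L / c) ^ 2 := by gcongr
    _ = L ^ 2 / c := by field_simp

lemma two_sqrt_mul_l2norm_restr_le_of_abs_mul_le (hL : 0 ≤ L)
    (hbd : ∀ j ∈ S, |x j| * c ≤ L) :
    2 * √(c : ℝ) * l2norm (restr x S) ≤ L + l1norm (restr x S) := by
  have hsq : c * l2norm (restr x S) ^ 2 ≤ L * l1norm (restr x S) := by
    rw [l2norm_restr_sq, l1norm_restr, mul_sum, mul_sum]
    refine sum_le_sum fun i hi => ?_
    rw [← sq_abs]
    nlinarith [hbd i hi, abs_nonneg (x i)]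
  refine (pow_le_pow_iff_left₀ (mul_nonneg (by positivity) (l2norm_nonneg _))
    (add_nonneg hL (l1norm_nonneg _))
    two_ne_zero).mp ?_
  rw [mul_pow, mul_pow, Real.sq_sqrt (Nat.cast_nonneg _)]
  nlinarith [sq_nonneg (L - l1norm (restr x S))]

end BoundedEntries

section TopEntries

variable {n : ℕ}

lemma exists_isMaxIdxOn (w : Fin n → ℝ) {c : ℕ} {S : Finset (Fin n)} (hc : c ≤ S.card) :
    ∃ T, IsMaxIdxOn w c T S := by
  induction c generalizing S with
  | zero => exact ⟨∅, empty_subset _, rfl, by simp⟩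
  | succ c ih =>
    obtain ⟨i₀, hi₀S, hi₀max⟩ :=
      S.exists_max_image (fun i => |w i|) (card_pos.mp (by omega))
    obtain ⟨T, hTS, hTcard, hTmax⟩ := ih (S := S.erase i₀)
      (by rw [card_erase_of_mem hi₀S]; omega)
    have hi₀T : i₀ ∉ T := fun h => notMem_erase i₀ S (hTS h)
    refine ⟨insert i₀ T, insert_subset hi₀S (hTS.trans (erase_subset _ _)), ?_, ?_⟩
    · rw [card_insert_of_notMem hi₀T, hTcard]
    · intro i hi j hj
      obtain ⟨hjS, hjT⟩ := mem_sdiff.mp hj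
      rcases mem_insert.mp hi with rfl | hiT
      · exact hi₀max j hjS
      · refine hTmax i hiT j (mem_sdiff.mpr ⟨mem_erase.mpr ⟨?_, hjS⟩, ?_⟩)
        · rintro rfl
          exact hjT (mem_insert_self _ _)
        · exact fun h => hjT (mem_insert_of_mem h)

variable {w : Fin n → ℝ} {c : ℕ} {T S : Finset (Fin n)}

lemma IsMaxIdxOn.abs_mul_le_l1norm (h : IsMaxIdxOn w c T S) {j : Fin n} (hj : j ∈ S \ T) :
    |w j| * c ≤ l1norm (restr w T) := by
  obtain ⟨-, hTcard, hTmax⟩ := h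
  calc |w j| * c = ∑ _i ∈ T, |w j| := by rw [sum_const, nsmul_eq_mul, hTcard, mul_comm]
    _ ≤ ∑ i ∈ T, |w i| := sum_le_sum fun i hi => hTmax i hi j hj
    _ = l1norm (restr w T) := (l1norm_restr w T).symm

lemma IsMaxIdxOn.abs_mul_le_l1norm_of_min (h : IsMaxIdxOn w (min c S.card) T S) {j : Fin n}
    (hj : j ∈ S \ T) :
    |w j| * c ≤ l1norm (restr w T) := by
  rcases le_total c S.card with hc | hc
  · rw [min_eq_left hc] at h
    exact h.abs_mul_le_l1norm hj
  · rw [min_eq_right hc] at h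
    rw [eq_of_subset_of_card_le h.1 h.2.1.ge, sdiff_self] at hj
    exact absurd hj (notMem_empty j)

lemma IsMaxIdxOn.two_sqrt_mul_l2norm_restr_sdiff_le (h : IsMaxIdxOn w (min c S.card) T S) :
    2 * √(c : ℝ) * l2norm (restr w (S \ T)) ≤ l1norm (restr w S) := by
  rw [← l1norm_restr_add_restr_sdiff w h.1]
  exact two_sqrt_mul_l2norm_restr_le_of_abs_mul_le (l1norm_nonneg _)
    fun _ hj => h.abs_mul_le_l1norm_of_min hj

end TopEntries

section BlockDecomposition

open Matrix

variable {n m : ℕ} (A : Matrix (Fin m) (Fin n) ℝ) {c : ℕ} {K : ℝ}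

/-- Peel off the `c` largest entries of `w` on `S` as one block; every remaining entry is at most
the average of that block, which feeds the next step of the induction. -/
theorem l1norm_mulVec_restr_le_of_abs_mul_le (hc : 0 < c) (hK : 0 ≤ K)
    (hA : ∀ v : Fin n → ℝ, Sparse c v → l1norm (A *ᵥ v) ≤ K * l2norm v)
    (w : Fin n → ℝ) (S : Finset (Fin n)) {L : ℝ} (hL : 0 ≤ L) (hbd : ∀ j ∈ S, |w j| * c ≤ L) :
    l1norm (A *ᵥ restr w S) ≤ K * (L + l1norm (restr w S)) / √(c : ℝ) := by
  induction S using Finset.strongInduction generalizing L with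
  | _ S ih =>
    by_cases hS : S.card ≤ c
    · calc l1norm (A *ᵥ restr w S) ≤ K * l2norm (restr w S) := hA _ (sparse_restr w hS)
        _ ≤ K * (L / √(c : ℝ)) := by gcongr; exact l2norm_restr_le_of_abs_mul_le hc hL hS hbd
        _ ≤ K * (L + l1norm (restr w S)) / √(c : ℝ) := by
          rw [← mul_div_assoc]; gcongr; exact le_add_of_nonneg_right (l1norm_nonneg _)
    obtain ⟨B, hB⟩ := exists_isMaxIdxOn w (show c ≤ S.card by omega)
    have hBS : B ⊆ S := hB.1
    have hBcard : B.card = c := hB.2.1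
    have hrest := ih (S \ B) (sdiff_ssubset hBS (card_pos.mp (by omega))) (l1norm_nonneg _)
      fun _ hj => hB.abs_mul_le_l1norm hj
    calc l1norm (A *ᵥ restr w S)
        ≤ l1norm (A *ᵥ restr w B) + l1norm (A *ᵥ restr w (S \ B)) := by
          rw [← restr_add_restr_sdiff w hBS, mulVec_add]; exact l1norm_add_le _ _
      _ ≤ K * (L / √(c : ℝ)) + K * l1norm (restr w S) / √(c : ℝ) := by
          gcongr
          · refine (hA _ (sparse_restr w hBcard.le)).trans ?_
            gcongr
            exact l2norm_restr_le_of_abs_mul_le hc hL hBcard.le fun j hj => hbd j (hBS hj)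
          · rwa [l1norm_restr_add_restr_sdiff w hBS] at hrest
      _ = K * (L + l1norm (restr w S)) / √(c : ℝ) := by ring

lemma IsMaxIdxOn.l1norm_mulVec_restr_sdiff_le {w : Fin n → ℝ} {T S : Finset (Fin n)}
    (h : IsMaxIdxOn w (min c S.card) T S) (hc : 0 < c) (hK : 0 ≤ K)
    (hA : ∀ v : Fin n → ℝ, Sparse c v → l1norm (A *ᵥ v) ≤ K * l2norm v) :
    l1norm (A *ᵥ restr w (S \ T)) ≤ K * l1norm (restr w S) / √(c : ℝ) := by
  rw [← l1norm_restr_add_restr_sdiff w h.1]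
  exact l1norm_mulVec_restr_le_of_abs_mul_le A hc hK hA w _ (l1norm_nonneg _)
    fun _ hj => h.abs_mul_le_l1norm_of_min hj

lemma l1norm_mulVec_restr_le (v : Fin n → ℝ) (S : Finset (Fin n)) :
    l1norm (A *ᵥ restr v S) ≤ l1norm (A *ᵥ v) + l1norm (A *ᵥ restr v Sᶜ) := by
  rw [eq_sub_of_add_eq (restr_add_restr_compl v S), Matrix.mulVec_sub]
  exact l1norm_sub_le _ _

end BlockDecomposition

section Recovery

open Matrix

variable {n m : ℕ}

lemma l1norm_mulVec_sub_le_two_mul (A : Matrix (Fin m) (Fin n) ℝ) {x xhat : Fin n → ℝ}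
    {z b : Fin m → ℝ} {η : ℝ} (hb : b = A *ᵥ x + z) (hz : l1norm z ≤ η)
    (hfeas : l1norm (b - A *ᵥ xhat) ≤ η) :
    l1norm (A *ᵥ (xhat - x)) ≤ 2 * η := by
  have h : A *ᵥ (xhat - x) = z - (b - A *ᵥ xhat) := by
    rw [hb, Matrix.mulVec_sub]; abel
  rw [h]
  linarith [l1norm_sub_le z (b - A *ᵥ xhat)]

lemma l1norm_restr_compl_sub_le {α : ℝ} (hα : 0 ≤ α) {x xhat : Fin n → ℝ}
    (hmin : l1norm xhat - α * l2norm xhat ≤ l1norm x - α * l2norm x) (T : Finset (Fin n)) :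
    l1norm (restr (xhat - x) Tᶜ) ≤
      l1norm (restr (xhat - x) T) + α * l2norm (xhat - x) + 2 * l1norm (restr x Tᶜ) := by
  have hxhat : xhat = x + (xhat - x) := (add_sub_cancel x xhat).symm
  have hl2 : α * l2norm xhat ≤ α * (l2norm x + l2norm (xhat - x)) := by
    have := l2norm_add_le x (xhat - x)
    rw [← hxhat] at this
    gcongr
  have hT := l1norm_restr_sub_l1norm_restr_le x (xhat - x) T
  have hTc := l1norm_restr_sub_l1norm_restr_le (xhat - x) x Tᶜ
  rw [← hxhat] at hT
  rw [add_comm, ← hxhat] at hTc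
  linarith [l1norm_restr_add_restr_compl x T, l1norm_restr_add_restr_compl xhat T]

/-- Solves the system of inequalities for `t = ‖d‖₂`, where `Λ = ‖d_{T ∪ T₁}‖₂`,
`u = ‖d_{Tᶜ}‖₁`, `β = ‖d_{(T ∪ T₁)ᶜ}‖₂`, `e = 2‖x_{Tᶜ}‖₁`, `p = √s`, `q = √(ks)` and `r = √k`. -/
lemma le_of_rip_and_cone_inequalities {α p q r a ρ δlb δub η e Λ u t β : ℝ}
    (hα : 0 < α) (hp : 0 < p) (hr : r * p = q) (ha_def : a = (q - α) / (p + α)) (ha : 1 < a)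
    (hδub : 0 ≤ δub) (hcond : δub + a * δlb < a - 1) (hρ : ρ = 1 - δlb - (1 + δub) / a)
    (hu : 0 ≤ u)
    (hI : (1 - δlb) * Λ ≤ 2 * η + (1 + δub) * u / q)
    (hII : u ≤ p * Λ + α * t + e) (ht : t ≤ Λ + β) (hβ : 2 * q * β ≤ u) :
    t ≤ 2 * (2 * r + 1) * p / ((2 * q - α) * ρ) * η +
      p / (2 * q - α) * ((2 * r + 1) * (1 + δub) * p / (ρ * (q - α)) + 1) * (e / p) := by
  have hpα : 0 < p + α := by positivity
  have hax : a * (p + α) = q - α := by rw [ha_def]; field_simp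
  have hqα : p + α < q - α := by nlinarith
  have hq : 0 < q := by linarith
  have hρ_pos : 0 < ρ := by
    rw [hρ, sub_pos, div_lt_iff₀ (by linarith)]
    linarith
  have hu_le : u * (q - α) ≤ q * ((p + α) * Λ + e) := by
    nlinarith [mul_le_mul_of_nonneg_left hII hq.le,
      mul_le_mul_of_nonneg_left ht (mul_nonneg hα.le hq.le), mul_le_mul_of_nonneg_left hβ hα.le]
  have hΛ_le : ρ * (q - α) * Λ ≤ 2 * η * (q - α) + (1 + δub) * e := by
    have hIq : (1 - δlb) * Λ * q ≤ 2 * η * q + (1 + δub) * u := by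
      have := mul_le_mul_of_nonneg_right hI hq.le
      rwa [add_mul, div_mul_cancel₀ _ hq.ne'] at this
    have hρq : ρ * (q - α) = (1 - δlb) * (q - α) - (1 + δub) * (p + α) := by
      rw [hρ, ← hax]; field_simp
    refine le_of_mul_le_mul_right ?_ hq
    rw [hρq]
    nlinarith [mul_le_mul_of_nonneg_right hIq (by linarith : 0 ≤ q - α),
      mul_le_mul_of_nonneg_left hu_le (by linarith : 0 ≤ 1 + δub)]
  have ht_le : t * (2 * q - α) ≤ (2 * q + p) * Λ + e := by nlinarith
  have hqα_pos : 0 < q - α := by linarith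
  have h2qα_pos : 0 < 2 * q - α := by linarith
  calc t ≤ ((2 * q + p) * (2 * η * (q - α) + (1 + δub) * e) + e * (ρ * (q - α))) /
        ((2 * q - α) * (ρ * (q - α))) := by
        rw [le_div_iff₀ (by positivity)]
        nlinarith [mul_le_mul_of_nonneg_left hΛ_le (by linarith : 0 ≤ 2 * q + p),
          mul_le_mul_of_nonneg_right ht_le (by positivity : 0 ≤ ρ * (q - α))]
    _ = _ := by
      rw [← hr] at hqα_pos h2qα_pos ⊢
      field_simp
      ring

end Recovery

theorem stmt7_general {n m : ℕ} (α : ℝ) (hα0 : 0 < α)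
    (s : ℕ) (hs : 0 < s)
    (k : ℝ) (hk : 0 < k) (ks : ℕ) (hks : 0 < ks) (hksk : (ks : ℝ) = k * s)
    (a : ℝ) (ha_def : a = (Real.sqrt (ks : ℝ) - α) / (Real.sqrt s + α)) (ha : 1 < a)
    (A : Matrix (Fin m) (Fin n) ℝ) (δlb δub : ℝ) (hδub : 0 ≤ δub)
    (hRIPlb : ∀ v : Fin n → ℝ, Sparse (ks + s) v →
      (1 - δlb) * l2norm v ≤ l1norm (A.mulVec v))
    (hRIPub : ∀ v : Fin n → ℝ, Sparse ks v →
      l1norm (A.mulVec v) ≤ (1 + δub) * l2norm v)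
    (hcond : δub + a * δlb < a - 1)
    (x : Fin n → ℝ) (z : Fin m → ℝ) (η₁ : ℝ) (hz : l1norm z ≤ η₁)
    (b : Fin m → ℝ) (hb : b = A.mulVec x + z)
    (xhat : Fin n → ℝ) (hfeas : l1norm (b - A.mulVec xhat) ≤ η₁)
    (hmin : l1norm xhat - α * l2norm xhat ≤ l1norm x - α * l2norm x)
    (Tx : Finset (Fin n)) (hTx : IsMaxIdx x s Tx)
    (ρ : ℝ) (hρ : ρ = 1 - δlb - (1 + δub) / a) :
    l2norm (xhat - x) ≤
      2 * (2 * Real.sqrt k + 1) * Real.sqrt s /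
          ((2 * Real.sqrt (ks : ℝ) - α) * ρ) * η₁ +
      Real.sqrt s / (2 * Real.sqrt (ks : ℝ) - α) *
          ((2 * Real.sqrt k + 1) * (1 + δub) * Real.sqrt s /
              (ρ * (Real.sqrt (ks : ℝ) - α)) + 1) *
          (2 * l1norm (restr x Txᶜ) / Real.sqrt s) := by
  set d := xhat - x
  obtain ⟨T₁, hT₁⟩ := exists_isMaxIdxOn d (min_le_right ks Txᶜ.card)
  set U := Tx ∪ T₁
  have hU_compl : Uᶜ = Txᶜ \ T₁ := by rw [compl_union, sdiff_eq_inter_compl, inter_comm]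
  have hU_card : U.card ≤ ks + s := by
    have : U.card ≤ Tx.card + T₁.card := card_union_le _ _
    rw [hTx.2.1, hT₁.2.1] at this
    omega
  have hI : (1 - δlb) * l2norm (restr d U) ≤ 2 * η₁ + (1 + δub) * l1norm (restr d Txᶜ) / √ks :=
    calc (1 - δlb) * l2norm (restr d U) ≤ l1norm (A.mulVec (restr d U)) :=
          hRIPlb _ (sparse_restr d hU_card)
      _ ≤ l1norm (A.mulVec d) + l1norm (A.mulVec (restr d Uᶜ)) := l1norm_mulVec_restr_le A d U
      _ ≤ _ := add_le_add (l1norm_mulVec_sub_le_two_mul A hb hz hfeas)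
          (hU_compl ▸ hT₁.l1norm_mulVec_restr_sdiff_le A hks (by linarith) hRIPub)
  have hII : l1norm (restr d Txᶜ) ≤ √s * l2norm (restr d U) + α * l2norm d +
      2 * l1norm (restr x Txᶜ) := by
    have hTx_l1 := l1norm_restr_le_sqrt_card_mul_l2norm d Tx
    rw [hTx.2.1] at hTx_l1
    have := mul_le_mul_of_nonneg_left (l2norm_restr_mono d (subset_union_left : Tx ⊆ U))
      (Real.sqrt_nonneg s)
    linarith [l1norm_restr_compl_sub_le hα0.le hmin Tx]
  exact le_of_rip_and_cone_inequalities hα0 (Real.sqrt_pos.mpr (Nat.cast_pos.mpr hs))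
    (by rw [hksk, Real.sqrt_mul hk.le]) ha_def ha hδub hcond hρ (l1norm_nonneg _) hI hII
    (l2norm_le_restr_add_restr_compl d U) (hU_compl ▸ hT₁.two_sqrt_mul_l2norm_restr_sdiff_le)

/-- stable recovery via `ℓ₁ − αℓ₂`-LAD.  Let `0 < α ≤ 1`, `s ∈ [1, n]`,
`k > 0` with `ks ∈ ℤ₊` and `a = a(s,ks;α) = (√(ks) − α)/(√s + α) > 1`.  Let `b = Ax + z`
with `‖z‖₁ ≤ η₁`.  If `A` has (ℓ₂,ℓ₁)-RIP constants satisfying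
`δ_{ks}^{ub} + a·δ_{(k+1)s}^{lb} < a − 1` and `x̂` satisfies `‖b − Ax̂‖₁ ≤ η₁` and
`‖x̂‖₁ − α‖x̂‖₂ ≤ ‖x‖₁ − α‖x‖₂`, then with `ρ = 1 − δ_{(k+1)s}^{lb} − (1 + δ_{ks}^{ub})/a`:
`‖x̂ − x‖₂ ≤ [2(2√k + 1)√s / ((2√(ks) − α)ρ)]·η₁
  + [√s/(2√(ks) − α)]·[(2√k + 1)(1 + δ_{ks}^{ub})√s/(ρ(√(ks) − α)) + 1]·(2‖x₋ₘₐₓ₍ₛ₎‖₁/√s)`. -/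
theorem stmt7 {n m : ℕ} (α : ℝ) (hα0 : 0 < α) (hα1 : α ≤ 1)
    (s : ℕ) (hs : 0 < s) (hsn : s ≤ n)
    (k : ℝ) (hk : 0 < k) (ks : ℕ) (hks : 0 < ks) (hksk : (ks : ℝ) = k * s)
    (a : ℝ) (ha_def : a = (Real.sqrt (ks : ℝ) - α) / (Real.sqrt s + α)) (ha : 1 < a)
    (A : Matrix (Fin m) (Fin n) ℝ) (δlb δub : ℝ) (hδlb : 0 ≤ δlb) (hδub : 0 ≤ δub)
    (hRIPlb : ∀ v : Fin n → ℝ, Sparse (ks + s) v →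
      (1 - δlb) * l2norm v ≤ l1norm (A.mulVec v))
    (hRIPub : ∀ v : Fin n → ℝ, Sparse ks v →
      l1norm (A.mulVec v) ≤ (1 + δub) * l2norm v)
    (hcond : δub + a * δlb < a - 1)
    (x : Fin n → ℝ) (z : Fin m → ℝ) (η₁ : ℝ) (hz : l1norm z ≤ η₁)
    (b : Fin m → ℝ) (hb : b = A.mulVec x + z)
    (xhat : Fin n → ℝ) (hfeas : l1norm (b - A.mulVec xhat) ≤ η₁)
    (hmin : l1norm xhat - α * l2norm xhat ≤ l1norm x - α * l2norm x)
    (Tx : Finset (Fin n)) (hTx : IsMaxIdx x s Tx)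
    (ρ : ℝ) (hρ : ρ = 1 - δlb - (1 + δub) / a) :
    l2norm (xhat - x) ≤
      2 * (2 * Real.sqrt k + 1) * Real.sqrt s /
          ((2 * Real.sqrt (ks : ℝ) - α) * ρ) * η₁ +
      Real.sqrt s / (2 * Real.sqrt (ks : ℝ) - α) *
          ((2 * Real.sqrt k + 1) * (1 + δub) * Real.sqrt s /
              (ρ * (Real.sqrt (ks : ℝ) - α)) + 1) *
          (2 * l1norm (restr x Txᶜ) / Real.sqrt s) :=
  stmt7_general α hα0 s hs k hk ks hks hksk a ha_def ha A δlb δub hδub hRIPlb hRIPub hcond x z η₁ hz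
    b hb xhat hfeas hmin Tx hTx ρ hρ
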